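/- Let 0 < α₁ < 1, α_k ≥ 0 with ∑_{k=1}^n α_k = 1, 0 < δ ≤ 1 ≤ M, K₂ < K₀, and let F, F₁ ∈ F_I(K₁δ, K₀M). If f, f₁ ∈ F_I(δ,M) satisfy ∑_{k=1}^n α_k fᵏ(x) = F(x) and ∑_{k=1}^n α_k f₁ᵏ(x) = F₁(x) for all x ∈ ℝ, then ‖f − f₁‖ ≤ (1/(K₀ − K₂)) ‖F − F₁‖, where ‖·‖ is the supremum norm over ℝ. -/

import Mathlib

/-!
Put `d = ‖f - f₁‖` and suppose `f₁ x ≤ f x`. Splitting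
`fᵏ x - f₁ᵏ x = (fᵏ⁻¹ (f x) - fᵏ⁻¹ (f₁ x)) + (fᵏ⁻¹ (f₁ x) - f₁ᵏ⁻¹ (f₁ x))`,
the first bracket is at least `δᵏ⁻¹ (f x - f₁ x)` because `f` is increasing with slope `≥ δ`,
and the second is at least `-d ∑_{j < k-1} Mʲ` because `f` is `M`-Lipschitz. Weighting by `α k`
and summing gives `K₀ |f x - f₁ x| ≤ |F x - F₁ x| + K₂ d` (by symmetry for every `x`), and taking
the supremum over `x` gives `(K₀ - K₂) d ≤ ‖F - F₁‖`.
-/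

open Finset

section Iterates

variable {s : Set ℝ} {f g : ℝ → ℝ} {δ M d : ℝ}

theorem abs_sub_le_of_slope_bounds (hδ : 0 ≤ δ)
    (hf : ∀ x ∈ s, ∀ y ∈ s, y ≤ x → δ * (x - y) ≤ f x - f y ∧ f x - f y ≤ M * (x - y))
    {x y : ℝ} (hx : x ∈ s) (hy : y ∈ s) : |f x - f y| ≤ M * |x - y| := by
  wlog hxy : y ≤ x generalizing x y
  · rw [abs_sub_comm, abs_sub_comm x]
    exact this hy hx (le_of_not_ge hxy)
  obtain ⟨hlow, hup⟩ := hf x hx y hy hxy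
  rw [abs_of_nonneg (by nlinarith), abs_of_nonneg (sub_nonneg.mpr hxy)]
  exact hup

theorem pow_mul_sub_le_iterate_sub (hδ : 0 ≤ δ) (hf : Set.MapsTo f s s)
    (hlow : ∀ x ∈ s, ∀ y ∈ s, y ≤ x → δ * (x - y) ≤ f x - f y)
    {x y : ℝ} (hx : x ∈ s) (hy : y ∈ s) (hxy : y ≤ x) (m : ℕ) :
    δ ^ m * (x - y) ≤ f^[m] x - f^[m] y := by
  induction m with
  | zero => simp
  | succ m ih =>
    have hmono : f^[m] y ≤ f^[m] x := by nlinarith [pow_nonneg hδ m]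
    rw [Function.iterate_succ_apply', Function.iterate_succ_apply']
    calc δ ^ (m + 1) * (x - y) = δ * (δ ^ m * (x - y)) := by ring
      _ ≤ δ * (f^[m] x - f^[m] y) := mul_le_mul_of_nonneg_left ih hδ
      _ ≤ f (f^[m] x) - f (f^[m] y) := hlow _ (hf.iterate m hx) _ (hf.iterate m hy) hmono

theorem abs_iterate_sub_iterate_le (hM : 0 ≤ M) (hf : Set.MapsTo f s s) (hg : Set.MapsTo g s s)
    (hlip : ∀ x ∈ s, ∀ y ∈ s, |f x - f y| ≤ M * |x - y|) (hd : ∀ x ∈ s, |f x - g x| ≤ d)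
    {x : ℝ} (hx : x ∈ s) (m : ℕ) :
    |f^[m] x - g^[m] x| ≤ d * ∑ j ∈ range m, M ^ j := by
  induction m with
  | zero => simp
  | succ m ih =>
    rw [Function.iterate_succ_apply', Function.iterate_succ_apply', geom_sum_succ]
    calc |f (f^[m] x) - g (g^[m] x)|
        ≤ |f (f^[m] x) - f (g^[m] x)| + |f (g^[m] x) - g (g^[m] x)| := abs_sub_le _ _ _
      _ ≤ M * |f^[m] x - g^[m] x| + d :=
          add_le_add (hlip _ (hf.iterate m hx) _ (hg.iterate m hx)) (hd _ (hg.iterate m hx))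
      _ ≤ M * (d * ∑ j ∈ range m, M ^ j) + d := by gcongr
      _ = d * (M * ∑ j ∈ range m, M ^ j + 1) := by ring

theorem pow_mul_sub_sub_le_iterate_succ_sub (hδ : 0 ≤ δ) (hM : 0 ≤ M)
    (hf : ∀ x, f x ∈ s) (hg : ∀ x, g x ∈ s)
    (hlow : ∀ x ∈ s, ∀ y ∈ s, y ≤ x → δ * (x - y) ≤ f x - f y)
    (hlip : ∀ x ∈ s, ∀ y ∈ s, |f x - f y| ≤ M * |x - y|) (hd : ∀ x ∈ s, |f x - g x| ≤ d)
    {x : ℝ} (hx : g x ≤ f x) (m : ℕ) :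
    δ ^ m * (f x - g x) - d * ∑ j ∈ range m, M ^ j ≤ f^[m + 1] x - g^[m + 1] x := by
  have hfs : Set.MapsTo f s s := fun y _ => hf y
  have hgs : Set.MapsTo g s s := fun y _ => hg y
  have hfirst := pow_mul_sub_le_iterate_sub hδ hfs hlow (hf x) (hg x) hx m
  have hsecond := abs_le.mp (abs_iterate_sub_iterate_le hM hfs hgs hlip hd (hg x) m)
  rw [Function.iterate_succ_apply, Function.iterate_succ_apply]
  linarith [hsecond.1]

theorem sum_mul_geom_sum_Icc_one (α : ℕ → ℝ) (M : ℝ) (n : ℕ) :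
    ∑ k ∈ Icc 1 n, α k * ∑ j ∈ range (k - 1), M ^ j
      = ∑ k ∈ Icc 2 n, α k * ∑ j ∈ range (k - 1), M ^ j := by
  refine (sum_subset (Icc_subset_Icc_left one_le_two) fun k hk hk2 => ?_).symm
  obtain rfl : k = 1 := by simp only [mem_Icc] at hk hk2; omega
  simp

theorem weighted_mul_sub_le (hδ : 0 ≤ δ) (hM : 0 ≤ M) {n : ℕ} {α : ℕ → ℝ}
    (hα : ∀ k ∈ Icc 1 n, 0 ≤ α k) (hf : ∀ x, f x ∈ s) (hg : ∀ x, g x ∈ s)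
    (hlow : ∀ x ∈ s, ∀ y ∈ s, y ≤ x → δ * (x - y) ≤ f x - f y)
    (hlip : ∀ x ∈ s, ∀ y ∈ s, |f x - f y| ≤ M * |x - y|) (hd : ∀ x ∈ s, |f x - g x| ≤ d)
    {x : ℝ} (hx : g x ≤ f x) :
    (∑ k ∈ Icc 1 n, α k * δ ^ (k - 1)) * (f x - g x)
      ≤ ∑ k ∈ Icc 1 n, α k * f^[k] x - ∑ k ∈ Icc 1 n, α k * g^[k] x
        + (∑ k ∈ Icc 2 n, α k * ∑ j ∈ range (k - 1), M ^ j) * d := by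
  have hterm : ∀ k ∈ Icc 1 n,
      α k * δ ^ (k - 1) * (f x - g x) - α k * (∑ j ∈ range (k - 1), M ^ j) * d
        ≤ α k * f^[k] x - α k * g^[k] x := by
    intro k hk
    obtain ⟨m, rfl⟩ : ∃ m, k = m + 1 := ⟨k - 1, by simp only [mem_Icc] at hk; omega⟩
    rw [Nat.add_sub_cancel]
    calc α (m + 1) * δ ^ m * (f x - g x) - α (m + 1) * (∑ j ∈ range m, M ^ j) * d
        = α (m + 1) * (δ ^ m * (f x - g x) - d * ∑ j ∈ range m, M ^ j) := by ring
      _ ≤ α (m + 1) * (f^[m + 1] x - g^[m + 1] x) := mul_le_mul_of_nonneg_left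
          (pow_mul_sub_sub_le_iterate_succ_sub hδ hM hf hg hlow hlip hd hx m) (hα _ hk)
      _ = α (m + 1) * f^[m + 1] x - α (m + 1) * g^[m + 1] x := mul_sub _ _ _
  have hsum := sum_le_sum hterm
  rw [sum_sub_distrib, sum_sub_distrib, ← sum_mul, ← sum_mul, sum_mul_geom_sum_Icc_one] at hsum
  linarith

theorem weighted_mul_abs_sub_le (hδ : 0 ≤ δ) (hM : 0 ≤ M) {n : ℕ} {α : ℕ → ℝ}
    (hα : ∀ k ∈ Icc 1 n, 0 ≤ α k) (hfs : ∀ x, f x ∈ s) (hgs : ∀ x, g x ∈ s)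
    (hf : ∀ x ∈ s, ∀ y ∈ s, y ≤ x → δ * (x - y) ≤ f x - f y ∧ f x - f y ≤ M * (x - y))
    (hg : ∀ x ∈ s, ∀ y ∈ s, y ≤ x → δ * (x - y) ≤ g x - g y ∧ g x - g y ≤ M * (x - y))
    (hd : ∀ x, |f x - g x| ≤ d) (x : ℝ) :
    (∑ k ∈ Icc 1 n, α k * δ ^ (k - 1)) * |f x - g x|
      ≤ |∑ k ∈ Icc 1 n, α k * f^[k] x - ∑ k ∈ Icc 1 n, α k * g^[k] x|
        + (∑ k ∈ Icc 2 n, α k * ∑ j ∈ range (k - 1), M ^ j) * d := by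
  rcases le_total (g x) (f x) with hx | hx
  · have key := weighted_mul_sub_le hδ hM hα hfs hgs (fun x hx y hy hxy => (hf x hx y hy hxy).1)
      (fun _ hx _ hy => abs_sub_le_of_slope_bounds hδ hf hx hy) (fun x _ => hd x) hx
    rw [abs_of_nonneg (sub_nonneg.mpr hx)]
    linarith [le_abs_self (∑ k ∈ Icc 1 n, α k * f^[k] x - ∑ k ∈ Icc 1 n, α k * g^[k] x)]
  · have key := weighted_mul_sub_le hδ hM hα hgs hfs (fun x hx y hy hxy => (hg x hx y hy hxy).1)
      (fun _ hx _ hy => abs_sub_le_of_slope_bounds hδ hg hx hy)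
      (fun x _ => abs_sub_comm (g x) (f x) ▸ hd x) hx
    rw [abs_sub_comm, abs_of_nonneg (sub_nonneg.mpr hx)]
    linarith [neg_abs_le (∑ k ∈ Icc 1 n, α k * f^[k] x - ∑ k ∈ Icc 1 n, α k * g^[k] x)]

end Iterates

theorem bddAbove_range_abs_sub_of_mem_Icc {ι : Type*} {a b : ℝ} {u v : ι → ℝ}
    (hu : ∀ x, u x ∈ Set.Icc a b) (hv : ∀ x, v x ∈ Set.Icc a b) :
    BddAbove (Set.range fun x => |u x - v x|) := by
  refine ⟨b - a, ?_⟩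
  rintro _ ⟨x, rfl⟩
  simpa only [Real.dist_eq] using Real.dist_le_of_mem_Icc (hu x) (hv x)

theorem sSup_range_le_of_forall_mul_le {ι : Type*} [Nonempty ι] {φ ψ : ι → ℝ} {K₀ K₂ : ℝ}
    (hK₂ : 0 ≤ K₂) (hK : K₂ < K₀) (hψ : BddAbove (Set.range ψ))
    (h : ∀ x, K₀ * φ x ≤ ψ x + K₂ * sSup (Set.range φ)) :
    sSup (Set.range φ) ≤ 1 / (K₀ - K₂) * sSup (Set.range ψ) := by
  have hK₀ : 0 < K₀ := hK₂.trans_lt hK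
  have hφ : sSup (Set.range φ) ≤ (sSup (Set.range ψ) + K₂ * sSup (Set.range φ)) / K₀ := by
    refine csSup_le (Set.range_nonempty φ) ?_
    rintro _ ⟨x, rfl⟩
    rw [le_div_iff₀ hK₀]
    linarith [h x, le_csSup hψ (Set.mem_range_self x)]
  rw [le_div_iff₀ hK₀] at hφ
  rw [one_div, inv_mul_eq_div, le_div_iff₀ (sub_pos.mpr hK)]
  linarith

theorem stmt16_general (a b δ M : ℝ) (hδ0 : 0 < δ)
    (hM : 1 ≤ M) (n : ℕ) (α : ℕ → ℝ)
    (hα1 : 0 < α 1)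
    (hα : ∀ k ∈ Finset.Icc 2 n, 0 ≤ α k)
    (hK : (∑ k ∈ Finset.Icc 2 n, α k * (∑ j ∈ Finset.range (k - 1), M ^ j))
        < ∑ k ∈ Finset.Icc 1 n, α k * δ ^ (k - 1))
    (F F₁ : ℝ → ℝ)
    (hFrange : Set.range F = Set.Icc a b)
    (hF₁range : Set.range F₁ = Set.Icc a b)
    (f f₁ : ℝ → ℝ)
    (hfrange : Set.range f = Set.Icc a b)
    (hflip : ∀ x ∈ Set.Icc a b, ∀ y ∈ Set.Icc a b, y ≤ x →
      δ * (x - y) ≤ f x - f y ∧ f x - f y ≤ M * (x - y))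
    (hf₁range : Set.range f₁ = Set.Icc a b)
    (hf₁lip : ∀ x ∈ Set.Icc a b, ∀ y ∈ Set.Icc a b, y ≤ x →
      δ * (x - y) ≤ f₁ x - f₁ y ∧ f₁ x - f₁ y ≤ M * (x - y))
    (heq : ∀ x : ℝ, ∑ k ∈ Finset.Icc 1 n, α k * f^[k] x = F x)
    (heq₁ : ∀ x : ℝ, ∑ k ∈ Finset.Icc 1 n, α k * f₁^[k] x = F₁ x) :
    sSup (Set.range fun x => |f x - f₁ x|)
      ≤ (1 / ((∑ k ∈ Finset.Icc 1 n, α k * δ ^ (k - 1))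
          - ∑ k ∈ Finset.Icc 2 n, α k * (∑ j ∈ Finset.range (k - 1), M ^ j))) *
        sSup (Set.range fun x => |F x - F₁ x|) := by
  have hfI := Set.range_subset_iff.mp hfrange.le
  have hf₁I := Set.range_subset_iff.mp hf₁range.le
  have hαn : ∀ k ∈ Icc 1 n, 0 ≤ α k := by
    intro k hk
    rcases (mem_Icc.mp hk).1.eq_or_lt with rfl | hk1
    · exact hα1.le
    · exact hα k (mem_Icc.mpr ⟨hk1, (mem_Icc.mp hk).2⟩)
  have hM0 : 0 ≤ M := zero_le_one.trans hM
  have hK₂ : 0 ≤ ∑ k ∈ Icc 2 n, α k * ∑ j ∈ range (k - 1), M ^ j :=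
    sum_nonneg fun k hk => mul_nonneg (hα k hk) (sum_nonneg fun j _ => pow_nonneg hM0 j)
  have hd (x : ℝ) : |f x - f₁ x| ≤ sSup (Set.range fun x => |f x - f₁ x|) :=
    le_csSup (bddAbove_range_abs_sub_of_mem_Icc hfI hf₁I) (Set.mem_range_self x)
  refine sSup_range_le_of_forall_mul_le hK₂ hK (bddAbove_range_abs_sub_of_mem_Icc
    (Set.range_subset_iff.mp hFrange.le) (Set.range_subset_iff.mp hF₁range.le)) fun x => ?_
  simpa only [heq, heq₁] using
    weighted_mul_abs_sub_le hδ0.le hM0 hαn hfI hf₁I hflip hf₁lip hd x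

/-- Stability: `‖f − f₁‖ ≤ ‖F − F₁‖ / (K₀ − K₂)` for solutions of the
polynomial-like equations with right-hand sides `F`, `F₁`. -/
theorem stmt16 (a b δ M : ℝ) (hab : a < b) (hδ0 : 0 < δ) (hδ1 : δ ≤ 1)
    (hM : 1 ≤ M) (n : ℕ) (α : ℕ → ℝ)
    (hα1 : 0 < α 1) (hα1' : α 1 < 1)
    (hα : ∀ k ∈ Finset.Icc 2 n, 0 ≤ α k)
    (hαsum : ∑ k ∈ Finset.Icc 1 n, α k = 1)
    (hK : (∑ k ∈ Finset.Icc 2 n, α k * (∑ j ∈ Finset.range (k - 1), M ^ j))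
        < ∑ k ∈ Finset.Icc 1 n, α k * δ ^ (k - 1))
    (F F₁ : ℝ → ℝ)
    (hFcont : Continuous F) (hFrange : Set.range F = Set.Icc a b)
    (hFa : F a = a) (hFb : F b = b)
    (hFlip : ∀ x ∈ Set.Icc a b, ∀ y ∈ Set.Icc a b, y ≤ x →
      ((∑ k ∈ Finset.Icc 1 n, α k * M ^ (k - 1)) * δ) * (x - y) ≤ F x - F y ∧
      F x - F y ≤ ((∑ k ∈ Finset.Icc 1 n, α k * δ ^ (k - 1)) * M) * (x - y))
    (hF₁cont : Continuous F₁) (hF₁range : Set.range F₁ = Set.Icc a b)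
    (hF₁a : F₁ a = a) (hF₁b : F₁ b = b)
    (hF₁lip : ∀ x ∈ Set.Icc a b, ∀ y ∈ Set.Icc a b, y ≤ x →
      ((∑ k ∈ Finset.Icc 1 n, α k * M ^ (k - 1)) * δ) * (x - y) ≤ F₁ x - F₁ y ∧
      F₁ x - F₁ y ≤ ((∑ k ∈ Finset.Icc 1 n, α k * δ ^ (k - 1)) * M) * (x - y))
    (f f₁ : ℝ → ℝ)
    (hfcont : Continuous f) (hfrange : Set.range f = Set.Icc a b)
    (hfa : f a = a) (hfb : f b = b)
    (hflip : ∀ x ∈ Set.Icc a b, ∀ y ∈ Set.Icc a b, y ≤ x →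
      δ * (x - y) ≤ f x - f y ∧ f x - f y ≤ M * (x - y))
    (hf₁cont : Continuous f₁) (hf₁range : Set.range f₁ = Set.Icc a b)
    (hf₁a : f₁ a = a) (hf₁b : f₁ b = b)
    (hf₁lip : ∀ x ∈ Set.Icc a b, ∀ y ∈ Set.Icc a b, y ≤ x →
      δ * (x - y) ≤ f₁ x - f₁ y ∧ f₁ x - f₁ y ≤ M * (x - y))
    (heq : ∀ x : ℝ, ∑ k ∈ Finset.Icc 1 n, α k * f^[k] x = F x)
    (heq₁ : ∀ x : ℝ, ∑ k ∈ Finset.Icc 1 n, α k * f₁^[k] x = F₁ x) :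
    sSup (Set.range fun x => |f x - f₁ x|)
      ≤ (1 / ((∑ k ∈ Finset.Icc 1 n, α k * δ ^ (k - 1))
          - ∑ k ∈ Finset.Icc 2 n, α k * (∑ j ∈ Finset.range (k - 1), M ^ j))) *
        sSup (Set.range fun x => |F x - F₁ x|) :=
  stmt16_general a b δ M hδ0 hM n α hα1 hα hK F F₁ hFrange hF₁range f f₁ hfrange hflip hf₁range
    hf₁lip heq heq₁
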